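/- Let K_{x_1,x_2,…,x_r} be the complete r-partite graph with independent classes of sizes x_1, x_2, …, x_r. Then ρ(K_{x_1,x_2,…,x_r}) = Σ_{i=1}^{r} x_i(x_i + 1)/2. -/

import Mathlib

/-- `ArrowsR G H` (written `G →r H`) means: every proper vertex coloring of `G`
contains a rainbow induced subgraph isomorphic to `H`, i.e. an induced copy of `H`
(a graph embedding) whose vertices receive pairwise distinct colors. -/
def ArrowsR {α β : Type} (G : SimpleGraph α) (H : SimpleGraph β) : Prop :=
  ∀ c : α → ℕ, (∀ u v : α, G.Adj u v → c u ≠ c v) →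
    ∃ f : H ↪g G, Function.Injective fun h => c (f h)

/-- `rho H` is the minimum number of vertices of a graph `G` with `G →r H`. -/
noncomputable def rho {β : Type} (H : SimpleGraph β) : ℕ :=
  sInf {m : ℕ | ∃ G : SimpleGraph (Fin m), ArrowsR G H}

/-!
Lower bound: colour a maximum independent set `A` of `G` with one colour and colour `G - A`
recursively with the other colours. A rainbow copy of `K_{x_1,…,x_r}` meets `A` in at most one
vertex, and the class containing it is an independent set, so has size at most `|A|`; deleting
that vertex leaves a rainbow copy in `G - A` with one class shrunk by one, which accounts for a
loss of `2 x_j ≤ 2 |A|` in `∑ x_i (x_i + 1)`. Only independence and disjointness of the classes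
matter, which is the form in which the induction is run.

Upper bound: take the join, over `i`, of disjoint cliques of sizes `1, …, x_i`. In a proper
colouring the `k`-th clique of part `i` shows `k` distinct colours, so by Hall's theorem one can
pick a vertex from each of them with pairwise distinct colours; vertices of different parts are
adjacent and hence differently coloured anyway.
-/

open SimpleGraph Finset Function

section LowerBound

variable {V ι : Type*} {G : SimpleGraph V}

variable (G) in
def IsRainbowIndepFamily (c : V → ℕ) (S : ι → Finset V) : Prop :=
  (∀ i, G.IsIndepSet (S i : Set V)) ∧ Pairwise (Disjoint on S) ∧
    Set.InjOn c (⋃ i, (S i : Set V))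

def layerColoring [DecidableEq V] (A : Finset V) (c : V → ℕ) (v : V) : ℕ :=
  if v ∈ A then 0 else c v + 1

lemma IsRainbowIndepFamily.sdiff [DecidableEq V] {c : V → ℕ} {S : ι → Finset V}
    {A : Finset V} (hS : IsRainbowIndepFamily G (layerColoring A c) S) :
    IsRainbowIndepFamily G c fun i => S i \ A := by
  obtain ⟨hind, hdisj, hinj⟩ := hS
  refine ⟨fun i => (hind i).mono (by simp),
    fun i j hij => (hdisj hij).mono sdiff_le sdiff_le, ?_⟩
  intro u hu v hv huv
  simp only [Set.mem_iUnion, coe_sdiff, Set.mem_sdiff, mem_coe] at hu hv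
  obtain ⟨i, hui, huA⟩ := hu
  obtain ⟨j, hvj, hvA⟩ := hv
  refine hinj (Set.mem_iUnion.2 ⟨i, hui⟩) (Set.mem_iUnion.2 ⟨j, hvj⟩) ?_
  simp [layerColoring, huA, hvA, huv]

lemma IsRainbowIndepFamily.sum_card_inter_le_one [DecidableEq V] [Fintype ι] {c : V → ℕ}
    {S : ι → Finset V} {A : Finset V} (hS : IsRainbowIndepFamily G (layerColoring A c) S) :
    ∑ i, #(S i ∩ A) ≤ 1 := by
  obtain ⟨-, hdisj, hinj⟩ := hS
  rw [← card_biUnion (s := univ) (t := fun i => S i ∩ A)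
    fun i _ j _ hij => (hdisj hij).mono inter_subset_left inter_subset_left, card_le_one]
  intro u hu v hv
  simp only [mem_biUnion, mem_univ, true_and, mem_inter] at hu hv
  obtain ⟨i, hui, huA⟩ := hu
  obtain ⟨j, hvj, hvA⟩ := hv
  exact hinj (Set.mem_iUnion.2 ⟨i, hui⟩) (Set.mem_iUnion.2 ⟨j, hvj⟩)
    (by simp [layerColoring, huA, hvA])

lemma IsRainbowIndepFamily.of_embedding {W : ι → Type*} [∀ i, Fintype (W i)]
    (f : completeMultipartiteGraph W ↪g G) {c : V → ℕ} (hf : Injective fun w => c (f w)) :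
    IsRainbowIndepFamily G c fun i => univ.map ((Embedding.sigmaMk i).trans f.toEmbedding) := by
  refine ⟨fun i => ?_, fun i j hij => ?_, ?_⟩
  · rintro _ hu _ hv -
    simp only [coe_map, Set.mem_image, mem_coe, mem_univ, true_and] at hu hv
    obtain ⟨a, rfl⟩ := hu
    obtain ⟨b, rfl⟩ := hv
    simp [f.map_adj_iff]
  · simp only [Finset.disjoint_left, mem_map, mem_univ, true_and, not_exists]
    rintro _ ⟨a, rfl⟩ b hab
    exact hij (congrArg Sigma.fst (f.injective hab)).symm
  · rintro _ hu _ hv huv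
    simp only [Set.mem_iUnion, coe_map, Set.mem_image, mem_coe, mem_univ, true_and] at hu hv
    obtain ⟨i, a, rfl⟩ := hu
    obtain ⟨j, b, rfl⟩ := hv
    exact congrArg f (hf huv)

lemma card_mul_succ_le_card_sdiff_mul_succ_add [DecidableEq V] (S A : Finset V) :
    #S * (#S + 1) ≤ #(S \ A) * (#(S \ A) + 1) + 2 * #S * #(S ∩ A) := by
  have h := card_sdiff_add_card_inter S A
  generalize #(S \ A) = s at h
  generalize #(S ∩ A) = t at h
  rw [← h]
  nlinarith [Nat.le_mul_self t]

lemma sum_card_mul_succ_le_of_layerColoring [DecidableEq V] [Fintype ι] {U A : Finset V}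
    {c : V → ℕ} (hAU : A ⊆ U) (hAmax : ∀ B ⊆ U, G.IsIndepSet (B : Set V) → #B ≤ #A)
    (hc : ∀ S : ι → Finset V, (∀ i, S i ⊆ U \ A) → IsRainbowIndepFamily G c S →
      ∑ i, #(S i) * (#(S i) + 1) ≤ 2 * #(U \ A))
    {S : ι → Finset V} (hSU : ∀ i, S i ⊆ U)
    (hS : IsRainbowIndepFamily G (layerColoring A c) S) :
    ∑ i, #(S i) * (#(S i) + 1) ≤ 2 * #U := by
  calc ∑ i, #(S i) * (#(S i) + 1)
      ≤ ∑ i, (#(S i \ A) * (#(S i \ A) + 1) + 2 * #A * #(S i ∩ A)) := by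
        gcongr with i
        refine (card_mul_succ_le_card_sdiff_mul_succ_add (S i) A).trans ?_
        gcongr _ + 2 * ?_ * _
        exact hAmax (S i) (hSU i) (hS.1 i)
    _ = ∑ i, #(S i \ A) * (#(S i \ A) + 1) + 2 * #A * ∑ i, #(S i ∩ A) := by
        rw [sum_add_distrib, mul_sum]
    _ ≤ 2 * #(U \ A) + 2 * #A * 1 := by
        gcongr
        · exact hc _ (fun i => sdiff_subset_sdiff (hSU i) subset_rfl) hS.sdiff
        · exact hS.sum_card_inter_le_one
    _ = 2 * #U := by
        rw [card_sdiff_of_subset hAU, mul_one, ← mul_add, Nat.sub_add_cancel (card_le_card hAU)]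

variable (G) in
lemma exists_maximum_isIndepSet_subset (U : Finset V) :
    ∃ A ⊆ U, G.IsIndepSet (A : Set V) ∧
      ∀ B ⊆ U, G.IsIndepSet (B : Set V) → #B ≤ #A := by
  classical
  obtain ⟨A, hA, hmax⟩ := exists_max_image
    (U.powerset.filter fun A : Finset V => G.IsIndepSet (A : Set V)) card ⟨∅, by simp⟩
  simp only [mem_filter, mem_powerset] at hA hmax
  exact ⟨A, hA.1, hA.2, fun B hBU hB => hmax B ⟨hBU, hB⟩⟩

variable (G ι) in
theorem exists_coloring_forall_sum_card_mul_succ_le [DecidableEq V] [Fintype ι] (U : Finset V) :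
    ∃ c : V → ℕ, (∀ u ∈ U, ∀ v ∈ U, G.Adj u v → c u ≠ c v) ∧
      ∀ S : ι → Finset V, (∀ i, S i ⊆ U) → IsRainbowIndepFamily G c S →
        ∑ i, #(S i) * (#(S i) + 1) ≤ 2 * #U := by
  induction U using Finset.strongInduction with
  | H U ih =>
  rcases U.eq_empty_or_nonempty with rfl | ⟨u, hu⟩
  · refine ⟨0, by simp, fun S hS _ => ?_⟩
    simp [subset_empty.1 (hS _)]
  obtain ⟨A, hAU, hAind, hAmax⟩ := exists_maximum_isIndepSet_subset G U
  have hAne : A.Nonempty := card_pos.1 <| hAmax {u} (by simpa) (by simp)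
  obtain ⟨c, hcU, hc⟩ := ih (U \ A) (sdiff_ssubset hAU hAne)
  refine ⟨layerColoring A c, fun v hv w hw hvw => ?_,
    fun S hSU hS => sum_card_mul_succ_le_of_layerColoring hAU hAmax hc hSU hS⟩
  by_cases hvA : v ∈ A <;> by_cases hwA : w ∈ A <;>
    simp only [layerColoring, hvA, hwA, if_true, if_false]
  · exact absurd hvw (hAind hvA hwA (G.ne_of_adj hvw))
  · omega
  · omega
  · exact fun h => hcU v (mem_sdiff.2 ⟨hv, hvA⟩) w (mem_sdiff.2 ⟨hw, hwA⟩) hvw (by omega)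

end LowerBound

theorem ArrowsR.sum_card_mul_succ_le {V ι : Type} [Fintype V] [Fintype ι] {W : ι → Type}
    [∀ i, Fintype (W i)] {G : SimpleGraph V} (h : ArrowsR G (completeMultipartiteGraph W)) :
    ∑ i, Fintype.card (W i) * (Fintype.card (W i) + 1) ≤ 2 * Fintype.card V := by
  classical
  obtain ⟨c, hc, hbound⟩ := exists_coloring_forall_sum_card_mul_succ_le ι G univ
  obtain ⟨f, hf⟩ := h c fun u v huv => hc u (mem_univ u) v (mem_univ v) huv
  simpa using hbound _ (fun i => subset_univ _) (.of_embedding f hf)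

lemma ArrowsR.of_iso {α α' β : Type} {G : SimpleGraph α} {G' : SimpleGraph α'}
    {H : SimpleGraph β} (h : ArrowsR G H) (φ : G ≃g G') : ArrowsR G' H := by
  intro c hc
  obtain ⟨f, hf⟩ := h (c ∘ φ) fun u v huv => hc _ _ (φ.map_adj_iff.2 huv)
  exact ⟨φ.toEmbedding.comp f, hf⟩

lemma Fin.exists_injective_mem_of_succ_le_card {α : Type*} [DecidableEq α] {m : ℕ}
    (t : Fin m → Finset α) (ht : ∀ k, k.1 + 1 ≤ #(t k)) :
    ∃ f : Fin m → α, Injective f ∧ ∀ k, f k ∈ t k := by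
  refine (all_card_le_biUnion_card_iff_exists_injective t).1 fun s => ?_
  rcases s.eq_empty_or_nonempty with rfl | hs
  · simp
  calc #s ≤ #(Iic (s.max' hs)) := card_le_card fun k hk => mem_Iic.2 (s.le_max' k hk)
    _ = s.max' hs + 1 := Fin.card_Iic _
    _ ≤ #(t (s.max' hs)) := ht _
    _ ≤ #(s.biUnion t) := card_le_card (subset_biUnion_of_mem t (s.max'_mem hs))

/-- The vertex `⟨⟨i, k⟩, a⟩` is the `a`-th vertex of the `k`-th clique (of size `k + 1`) of
part `i`. -/
def rainbowHost {ι : Type*} (x : ι → ℕ) :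
    SimpleGraph (Σ p : Σ i, Fin (x i), Fin (p.2 + 1)) where
  Adj u v := u.1.1 ≠ v.1.1 ∨ (u.1 = v.1 ∧ u ≠ v)
  symm := ⟨fun _ _ h => h.imp Ne.symm (And.imp Eq.symm Ne.symm)⟩
  loopless := ⟨fun _ h => h.elim (· rfl) (·.2 rfl)⟩

lemma card_rainbowHost_vertices {ι : Type*} [Fintype ι] (x : ι → ℕ) :
    Fintype.card (Σ p : Σ i, Fin (x i), Fin (p.2 + 1)) = ∑ i, x i * (x i + 1) / 2 := by
  simp only [Fintype.card_sigma, Fintype.card_fin]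
  rw [← univ_sigma_univ, sum_sigma]
  refine sum_congr rfl fun i _ => ?_
  rw [Fin.sum_univ_eq_sum_range (· + 1), ← add_zero (∑ k ∈ range _, _),
    ← sum_range_succ' (fun k => k), sum_range_id, Nat.add_sub_cancel, mul_comm]

theorem rainbowHost_arrowsR {ι : Type} (x : ι → ℕ) :
    ArrowsR (rainbowHost x) (completeMultipartiteGraph fun i => Fin (x i)) := by
  intro c hc
  have hcolors : ∀ i, ∃ g : Fin (x i) → ℕ, Injective g ∧
      ∀ k : Fin (x i), g k ∈ univ.image fun a : Fin (k + 1) => c ⟨⟨i, k⟩, a⟩ := by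
    refine fun i => Fin.exists_injective_mem_of_succ_le_card _ fun k => ?_
    rw [card_image_of_injective _ fun a b hab => ?_, card_univ, Fintype.card_fin]
    by_contra hne
    exact hc ⟨⟨i, k⟩, a⟩ ⟨⟨i, k⟩, b⟩
      (Or.inr ⟨rfl, fun h => hne (eq_of_heq (Sigma.mk.inj h).2)⟩) hab
  choose g hg hgc using hcolors
  simp only [mem_image, mem_univ, true_and] at hgc
  choose a ha using hgc
  refine ⟨⟨⟨fun p => ⟨p, a p.1 p.2⟩, fun p q h => congrArg Sigma.fst h⟩, ?_⟩,
    fun p q hpq => ?_⟩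
  · intro p q
    change p.1 ≠ q.1 ∨ (p = q ∧ _) ↔ p.1 ≠ q.1
    exact or_iff_left (by rintro ⟨rfl, hne⟩; exact hne rfl)
  · by_cases hpq' : p.1 = q.1
    · obtain ⟨i, k⟩ := p
      obtain ⟨j, l⟩ := q
      obtain rfl : i = j := hpq'
      change c ⟨⟨i, k⟩, a i k⟩ = c ⟨⟨i, l⟩, a i l⟩ at hpq
      rw [ha, ha] at hpq
      rw [hg i hpq]
    · exact absurd hpq (hc _ _ (Or.inl hpq'))

theorem stmt9_general (r : ℕ) (x : Fin r → ℕ) :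
    rho (SimpleGraph.completeMultipartiteGraph fun i : Fin r => Fin (x i)) =
      ∑ i : Fin r, x i * (x i + 1) / 2 := by
  set H := completeMultipartiteGraph fun i : Fin r => Fin (x i)
  have hhost : ∑ i, x i * (x i + 1) / 2 ∈ {m | ∃ G : SimpleGraph (Fin m), ArrowsR G H} :=
    ⟨_, (rainbowHost_arrowsR x).of_iso
      ((rainbowHost x).overFinIso (card_rainbowHost_vertices x))⟩
  refine le_antisymm (Nat.sInf_le hhost) ?_
  obtain ⟨G, hG⟩ : ∃ G : SimpleGraph (Fin (rho H)), ArrowsR G H := Nat.sInf_mem ⟨_, hhost⟩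
  have hsum := hG.sum_card_mul_succ_le
  simp only [Fintype.card_fin] at hsum
  rw [← Nat.mul_le_mul_left_iff two_pos, mul_sum]
  simpa only [Nat.two_mul_div_two_of_even (Nat.even_mul_succ_self _)] using hsum

/-- For the complete `r`-partite graph with class sizes `x 0, …, x (r-1)`:
`ρ(K_{x_1,…,x_r}) = Σ_i x_i (x_i + 1)/2`. -/
theorem stmt9 (r : ℕ) (x : Fin r → ℕ) (hx : ∀ i, 1 ≤ x i) :
    rho (SimpleGraph.completeMultipartiteGraph fun i : Fin r => Fin (x i)) =
      ∑ i : Fin r, x i * (x i + 1) / 2 :=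
  stmt9_general r x
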